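/- arXiv:2507.20432 — 5 statements merged into one kernel-verified Lean document; each statement's English description precedes it below -/
import Mathlib

section
/- For every composite integer n ≥ 4, we have (n² − n + 1)·σ_1(n) − σ_3(n) > 0. -/
/-- The divisor power sum `σ_k(n) = ∑_{d ∣ n} d^k`. -/
def sigma' (k n : ℕ) : ℕ := ∑ d ∈ n.divisors, d ^ k

theorem prime_detect_weight6_composite (n : ℕ) (hn : 2 ≤ n) (hcomp : ¬ n.Prime) :
    ((n : ℤ) ^ 2 - n + 1) * sigma' 1 n - sigma' 3 n > 0 := by
  obtain ⟨a, ha, h2a, han⟩ := Nat.exists_dvd_of_not_prime2 hn hcomp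
  have hn0 : n ≠ 0 := by omega
  set f : ℕ → ℤ := fun d => ((n:ℤ)^2 - n + 1) * d - (d:ℤ)^3 with hf
  have key : ((n : ℤ) ^ 2 - n + 1) * sigma' 1 n - sigma' 3 n
      = ∑ d ∈ n.divisors, f d := by
    simp only [sigma', hf]
    push_cast
    rw [Finset.mul_sum, ← Finset.sum_sub_distrib]
    simp [pow_one]
  rw [key]
  have hpos : ∀ d ∈ n.divisors, d ≠ n → 0 < f d := by
    intro d hd hdn
    obtain ⟨hdvd, -⟩ := Nat.mem_divisors.mp hd
    have h1 : 1 ≤ d := Nat.pos_of_dvd_of_pos hdvd (by omega)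
    have h2 : d ≤ n - 1 := by
      have := Nat.le_of_dvd (by omega) hdvd
      omega
    have h1' : (1:ℤ) ≤ d := by exact_mod_cast h1
    have h2' : (d:ℤ) ≤ (n:ℤ) - 1 := by
      have : (d:ℤ) ≤ ((n-1 : ℕ):ℤ) := by exact_mod_cast h2
      have hn' : (1:ℕ) ≤ n := by omega
      push_cast [hn'] at this
      linarith
    have hn' : (2:ℤ) ≤ n := by exact_mod_cast hn
    simp only [hf]
    nlinarith [mul_nonneg (by linarith : (0:ℤ) ≤ (n:ℤ) - 1 - d)
        (by linarith : (0:ℤ) ≤ (d:ℤ) - 1),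
      mul_nonneg (by linarith : (0:ℤ) ≤ (n:ℤ) - 1 - d)
        (by linarith : (0:ℤ) ≤ (n:ℤ) - 1 + d)]
  have hnmem : n ∈ n.divisors := Nat.mem_divisors_self n hn0
  rw [← Finset.add_sum_erase _ f hnmem]
  have hsub : ({1, a} : Finset ℕ) ⊆ n.divisors.erase n := by
    intro x hx
    simp only [Finset.mem_insert, Finset.mem_singleton] at hx
    rcases hx with rfl | rfl
    · exact Finset.mem_erase.mpr ⟨by omega, Nat.one_mem_divisors.mpr hn0⟩
    · exact Finset.mem_erase.mpr ⟨by omega, Nat.mem_divisors.mpr ⟨ha, hn0⟩⟩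
  have hge : ∑ d ∈ ({1, a} : Finset ℕ), f d ≤ ∑ d ∈ n.divisors.erase n, f d := by
    apply Finset.sum_le_sum_of_subset_of_nonneg hsub
    intro d hd _
    exact le_of_lt (hpos d (Finset.mem_of_mem_erase hd) (Finset.ne_of_mem_erase hd))
  have h1a : (1:ℕ) ≠ a := by omega
  rw [Finset.sum_insert (by simpa using h1a), Finset.sum_singleton] at hge
  have hfa : 0 < f a := hpos a (Nat.mem_divisors.mpr ⟨ha, hn0⟩) (by omega)
  have hfn : f n + f 1 = 0 := by simp only [hf]; push_cast; ring
  linarith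
end

section
/- For every integer n ≥ 2, the quantity (n² − n + 1)·σ_1(n) − σ_3(n) is nonnegative, and it equals 0 if and only if n is prime. -/
theorem prime_detect_weight6 (n : ℕ) (hn : 2 ≤ n) :
    0 ≤ ((n : ℤ) ^ 2 - n + 1) * sigma' 1 n - sigma' 3 n ∧
      (((n : ℤ) ^ 2 - n + 1) * sigma' 1 n - sigma' 3 n = 0 ↔ n.Prime) := by
  have hn0 : n ≠ 0 := by omega
  have hne : (1 : ℕ) ≠ n := by omega
  have hsub : ({1, n} : Finset ℕ) ⊆ n.divisors := by
    intro d hd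
    simp only [Finset.mem_insert, Finset.mem_singleton] at hd
    rcases hd with rfl | rfl
    · exact Nat.one_mem_divisors.mpr hn0
    · exact Nat.mem_divisors_self _ hn0
  let f : ℕ → ℤ := fun d => (d : ℤ) * ((n : ℤ) ^ 2 - (n : ℤ) + 1 - (d : ℤ) ^ 2)
  have hf : ∀ d, f d = (d : ℤ) * ((n : ℤ) ^ 2 - (n : ℤ) + 1 - (d : ℤ) ^ 2) := fun d => rfl
  have hsum : ((n : ℤ) ^ 2 - n + 1) * sigma' 1 n - sigma' 3 n
      = ∑ d ∈ n.divisors \ {1, n}, f d := by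
    have h1 : ((n : ℤ) ^ 2 - n + 1) * sigma' 1 n - sigma' 3 n = ∑ d ∈ n.divisors, f d := by
      simp only [sigma', hf]

      push_cast
      rw [Finset.mul_sum, ← Finset.sum_sub_distrib]
      exact Finset.sum_congr rfl fun d _ => by ring
    have h2 : ∑ d ∈ ({1, n} : Finset ℕ), f d = 0 := by
      rw [Finset.sum_pair hne]
      rw [hf, hf]
      push_cast
      ring
    rw [h1, ← Finset.sum_sdiff hsub, h2, add_zero]
  -- facts about elements of the sdiff
  have hkey : ∀ d ∈ n.divisors \ {1, n}, 0 < f d := by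
    intro d hd
    simp only [Finset.mem_sdiff, Finset.mem_insert, Finset.mem_singleton, Nat.mem_divisors] at hd
    obtain ⟨⟨hdvd, -⟩, hd1n⟩ := hd
    push_neg at hd1n
    obtain ⟨hd1, hdn⟩ := hd1n
    have hdpos : 0 < d := Nat.pos_of_dvd_of_pos hdvd (by omega)
    have hd2 : 2 ≤ d := by omega
    have h2d : 2 * d ≤ n := by
      obtain ⟨k, rfl⟩ := hdvd
      have hk : 2 ≤ k := by
        rcases Nat.lt_or_ge k 2 with h | h
        · interval_cases k <;> omega
        · exact h
      calc 2 * d = d * 2 := by ring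
        _ ≤ d * k := Nat.mul_le_mul_left d hk
    have hd2' : (2 : ℤ) ≤ (d : ℤ) := by exact_mod_cast hd2
    have h2d' : 2 * (d : ℤ) ≤ (n : ℤ) := by exact_mod_cast h2d
    have hn' : (2 : ℤ) ≤ (n : ℤ) := by exact_mod_cast hn
    rw [hf]
    nlinarith [mul_nonneg (by linarith : (0:ℤ) ≤ (n:ℤ) - 2*d) (by linarith : (0:ℤ) ≤ (n:ℤ) + 2*d),
      sq_nonneg ((n : ℤ) - 2)]
  have hnonneg : 0 ≤ ∑ d ∈ n.divisors \ {1, n}, f d :=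
    Finset.sum_nonneg fun d hd => (hkey d hd).le
  refine ⟨hsum ▸ hnonneg, ?_⟩
  rw [hsum]
  constructor
  · intro h0
    by_contra hp
    obtain ⟨m, hmdvd, hm2, hmn⟩ := Nat.exists_dvd_of_not_prime2 hn hp
    have hmem : m ∈ n.divisors \ {1, n} := by
      simp only [Finset.mem_sdiff, Finset.mem_insert, Finset.mem_singleton, Nat.mem_divisors]
      exact ⟨⟨hmdvd, hn0⟩, by omega⟩
    have := Finset.single_le_sum (fun d hd => (hkey d hd).le) hmem
    have := hkey m hmem
    omega
  · intro hp
    have : n.divisors \ {1, n} = ∅ := by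
      rw [Nat.Prime.divisors hp]
      simp
    rw [this, Finset.sum_empty]
end

section
/- Let k ≥ 8 be an even integer. Then for every composite integer n ≥ 2, we have (n² + 1)·σ_{k−5}(n) > n²·σ_{k−7}(n) + σ_{k−3}(n). -/
theorem prime_detect_weight_k_composite (k : ℕ) (hk : 8 ≤ k) (hke : Even k)
    (n : ℕ) (hn : 2 ≤ n) (hcomp : ¬ n.Prime) :
    ((n : ℤ) ^ 2 + 1) * sigma' (k - 5) n >
      (n : ℤ) ^ 2 * sigma' (k - 7) n + sigma' (k - 3) n := by
  obtain ⟨m, hmdvd, hm2, hmn⟩ := Nat.exists_dvd_of_not_prime2 hn hcomp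
  have hn0 : n ≠ 0 := by omega
  have h5 : k - 5 = (k - 7) + 2 := by omega
  have h3 : k - 3 = (k - 7) + 4 := by omega
  have key : ((n : ℤ) ^ 2 + 1) * sigma' (k - 5) n -
      ((n : ℤ) ^ 2 * sigma' (k - 7) n + sigma' (k - 3) n)
      = ∑ d ∈ n.divisors,
        (d : ℤ) ^ (k - 7) * (((d : ℤ) ^ 2 - 1) * ((n : ℤ) ^ 2 - (d : ℤ) ^ 2)) := by
    unfold sigma'
    push_cast
    rw [h5, h3, Finset.mul_sum, Finset.mul_sum, ← Finset.sum_add_distrib,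
      ← Finset.sum_sub_distrib]
    exact Finset.sum_congr rfl fun d hd => by ring
  have hpos : 0 < ∑ d ∈ n.divisors,
      (d : ℤ) ^ (k - 7) * (((d : ℤ) ^ 2 - 1) * ((n : ℤ) ^ 2 - (d : ℤ) ^ 2)) := by
    apply Finset.sum_pos'
    · intro d hd
      obtain ⟨hdvd, -⟩ := Nat.mem_divisors.mp hd
      have hd1 : 1 ≤ d := Nat.pos_of_dvd_of_pos hdvd (by omega)
      have hdn : d ≤ n := Nat.le_of_dvd (by omega) hdvd
      have h1 : (1 : ℤ) ≤ (d : ℤ) := by exact_mod_cast hd1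
      have h2 : (d : ℤ) ≤ (n : ℤ) := by exact_mod_cast hdn
      have : (0:ℤ) ≤ (d : ℤ) ^ (k - 7) := by positivity
      exact mul_nonneg this (mul_nonneg (by nlinarith) (by nlinarith))
    · refine ⟨m, Nat.mem_divisors.mpr ⟨hmdvd, hn0⟩, ?_⟩
      have h1 : (2 : ℤ) ≤ (m : ℤ) := by exact_mod_cast hm2
      have h2 : (m : ℤ) < (n : ℤ) := by exact_mod_cast hmn
      have h3 : (0:ℤ) < (m : ℤ) ^ (k - 7) := by positivity
      exact mul_pos h3 (mul_pos (by nlinarith) (by nlinarith))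
  linarith
end

section
/- For every integer n ≥ 1, we have 12·Σ_{m=1}^{n−1} σ_1(m)·σ_1(n−m) = 5·σ_3(n) + (1 − 6n)·σ_1(n). -/
/-- The set of quadruples `(a,b,c,d)` of positive naturals with `a*b + c*d = n`. -/
def Qd (n : ℕ) : Finset (ℕ × ℕ × ℕ × ℕ) :=
  ((Finset.Icc 1 n ×ˢ Finset.Icc 1 n ×ˢ Finset.Icc 1 n ×ˢ Finset.Icc 1 n)).filter
    fun x => x.1 * x.2.1 + x.2.2.1 * x.2.2.2 = n

lemma mem_Qd {n : ℕ} {x : ℕ × ℕ × ℕ × ℕ} :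
    x ∈ Qd n ↔ 0 < x.1 ∧ 0 < x.2.1 ∧ 0 < x.2.2.1 ∧ 0 < x.2.2.2 ∧
      x.1 * x.2.1 + x.2.2.1 * x.2.2.2 = n := by
  obtain ⟨a, b, c, d⟩ := x
  simp only [Qd, Finset.mem_filter, Finset.mem_product, Finset.mem_Icc]
  constructor
  · rintro ⟨⟨⟨ha, _⟩, ⟨hb, _⟩, ⟨hc, _⟩, ⟨hd, _⟩⟩, he⟩
    exact ⟨ha, hb, hc, hd, he⟩
  · rintro ⟨ha, hb, hc, hd, he⟩
    have h1 : a * b ≤ n := he ▸ Nat.le_add_right _ _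
    have h2 : c * d ≤ n := he ▸ Nat.le_add_left _ _
    exact ⟨⟨⟨ha, le_trans (Nat.le_mul_of_pos_right a hb) h1⟩,
      ⟨hb, le_trans (Nat.le_mul_of_pos_left b ha) h1⟩,
      ⟨hc, le_trans (Nat.le_mul_of_pos_right c hd) h2⟩,
      ⟨hd, le_trans (Nat.le_mul_of_pos_left d hc) h2⟩⟩, he⟩

/-- The part with `a > c`. -/
def Pd (n : ℕ) : Finset (ℕ × ℕ × ℕ × ℕ) := (Qd n).filter fun x => x.2.2.1 < x.1
/-- The part with `a < c`. -/
def Pl (n : ℕ) : Finset (ℕ × ℕ × ℕ × ℕ) := (Qd n).filter fun x => x.1 < x.2.2.1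
/-- The diagonal part `a = c`. -/
def Dg (n : ℕ) : Finset (ℕ × ℕ × ℕ × ℕ) := (Qd n).filter fun x => x.1 = x.2.2.1

lemma split_sum (n : ℕ) (f : ℕ × ℕ × ℕ × ℕ → ℤ) :
    ∑ x ∈ Qd n, f x = ∑ x ∈ Pd n, f x + ∑ x ∈ Pl n, f x + ∑ x ∈ Dg n, f x := by
  rw [← Finset.sum_filter_add_sum_filter_not (Qd n) (fun x => x.1 = x.2.2.1) f]
  rw [← Finset.sum_filter_add_sum_filter_not ((Qd n).filter fun x => ¬ x.1 = x.2.2.1)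
    (fun x => x.2.2.1 < x.1) f]
  rw [Finset.filter_filter, Finset.filter_filter]
  have e1 : ((Qd n).filter fun a => ¬a.1 = a.2.2.1 ∧ a.2.2.1 < a.1) = Pd n := by
    apply Finset.filter_congr; intro x _; constructor
    · rintro ⟨_, h⟩; exact h
    · intro h; exact ⟨by omega, h⟩
  have e2 : ((Qd n).filter fun a => ¬a.1 = a.2.2.1 ∧ ¬a.2.2.1 < a.1) = Pl n := by
    apply Finset.filter_congr; intro x _; constructor
    · rintro ⟨h1, h2⟩; omega
    · intro h; omega
  have e3 : ((Qd n).filter fun x => x.1 = x.2.2.1) = Dg n := rfl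
  rw [e1, e2, e3]; ring

lemma sigma1_sum (n : ℕ) (f : ℕ × ℕ × ℕ × ℕ → ℤ) :
    ∑ x ∈ Pl n, f x = ∑ x ∈ Pd n, f (x.2.2.1, x.2.2.2, x.1, x.2.1) := by
  refine Finset.sum_nbij' (fun x => (x.2.2.1, x.2.2.2, x.1, x.2.1))
    (fun x => (x.2.2.1, x.2.2.2, x.1, x.2.1)) ?_ ?_ ?_ ?_ ?_
  · rintro ⟨a, b, c, d⟩ hx
    simp only [Pl, Pd, Finset.mem_filter, mem_Qd] at hx ⊢
    obtain ⟨⟨ha, hb, hc, hd, he⟩, hlt⟩ := hx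
    exact ⟨⟨hc, hd, ha, hb, by rw [Nat.add_comm]; exact he⟩, hlt⟩
  · rintro ⟨a, b, c, d⟩ hx
    simp only [Pl, Pd, Finset.mem_filter, mem_Qd] at hx ⊢
    obtain ⟨⟨ha, hb, hc, hd, he⟩, hlt⟩ := hx
    exact ⟨⟨hc, hd, ha, hb, by rw [Nat.add_comm]; exact he⟩, hlt⟩
  · rintro ⟨a, b, c, d⟩ _; rfl
  · rintro ⟨a, b, c, d⟩ _; rfl
  · rintro ⟨a, b, c, d⟩ _; rfl

lemma sigma2_sum (n : ℕ) (f : ℕ × ℕ × ℕ × ℕ → ℤ) :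
    ∑ x ∈ Qd n, f x = ∑ x ∈ Qd n, f (x.2.1, x.1, x.2.2.2, x.2.2.1) := by
  refine Finset.sum_nbij' (fun x => (x.2.1, x.1, x.2.2.2, x.2.2.1))
    (fun x => (x.2.1, x.1, x.2.2.2, x.2.2.1)) ?_ ?_ ?_ ?_ ?_
  · rintro ⟨a, b, c, d⟩ hx
    simp only [mem_Qd] at hx ⊢
    obtain ⟨ha, hb, hc, hd, he⟩ := hx
    exact ⟨hb, ha, hd, hc, by rw [Nat.mul_comm b a, Nat.mul_comm d c]; exact he⟩
  · rintro ⟨a, b, c, d⟩ hx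
    simp only [mem_Qd] at hx ⊢
    obtain ⟨ha, hb, hc, hd, he⟩ := hx
    exact ⟨hb, ha, hd, hc, by rw [Nat.mul_comm b a, Nat.mul_comm d c]; exact he⟩
  · rintro ⟨a, b, c, d⟩ _; rfl
  · rintro ⟨a, b, c, d⟩ _; rfl
  · rintro ⟨a, b, c, d⟩ _; rfl

lemma theta_sum (n : ℕ) (f : ℕ × ℕ × ℕ × ℕ → ℤ) :
    ∑ x ∈ Pd n, f x = ∑ x ∈ Pd n, f (x.2.1 + x.2.2.2, x.2.2.1, x.2.1, x.1 - x.2.2.1) := by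
  refine Finset.sum_nbij' (fun x => (x.2.1 + x.2.2.2, x.2.2.1, x.2.1, x.1 - x.2.2.1))
    (fun x => (x.2.1 + x.2.2.2, x.2.2.1, x.2.1, x.1 - x.2.2.1)) ?_ ?_ ?_ ?_ ?_
  · rintro ⟨a, b, c, d⟩ hx
    simp only [Pd, Finset.mem_filter, mem_Qd] at hx ⊢
    obtain ⟨⟨ha, hb, hc, hd, he⟩, hac⟩ := hx
    obtain ⟨u, rfl⟩ : ∃ u, a = c + u := ⟨a - c, by omega⟩
    constructor
    · refine ⟨by omega, by omega, by omega, by omega, ?_⟩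
      have : c + u - c = u := by omega
      rw [this, ← he]; ring
    · omega
  · rintro ⟨a, b, c, d⟩ hx
    simp only [Pd, Finset.mem_filter, mem_Qd] at hx ⊢
    obtain ⟨⟨ha, hb, hc, hd, he⟩, hac⟩ := hx
    obtain ⟨u, rfl⟩ : ∃ u, a = c + u := ⟨a - c, by omega⟩
    constructor
    · refine ⟨by omega, by omega, by omega, by omega, ?_⟩
      have : c + u - c = u := by omega
      rw [this, ← he]; ring
    · omega
  · rintro ⟨a, b, c, d⟩ hx
    simp only [Pd, Finset.mem_filter, mem_Qd] at hx
    simp only [Prod.mk.injEq, true_and, and_true]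
    omega
  · rintro ⟨a, b, c, d⟩ hx
    simp only [Pd, Finset.mem_filter, mem_Qd] at hx
    simp only [Prod.mk.injEq, true_and, and_true]
    omega
  · rintro ⟨a, b, c, d⟩ hx
    simp only [Pd, Finset.mem_filter, mem_Qd] at hx
    congr 1
    simp only [Prod.mk.injEq, true_and, and_true]
    omega
lemma diag_sum (n : ℕ) (hn : 0 < n) (f : ℕ × ℕ × ℕ × ℕ → ℤ) :
    ∑ x ∈ Dg n, f x =
      ∑ a ∈ n.divisors, ∑ b ∈ Finset.Ico 1 (n / a), f (a, b, a, n / a - b) := by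
  rw [Finset.sum_sigma' n.divisors (fun a => Finset.Ico 1 (n / a))
    (fun a b => f (a, b, a, n / a - b))]
  refine (Finset.sum_nbij' (fun x => (x.1, x.2, x.1, n / x.1 - x.2))
    (fun x => ⟨x.1, x.2.1⟩) ?_ ?_ ?_ ?_ ?_).symm
  · rintro ⟨a, b⟩ hx
    simp only [Finset.mem_sigma, Nat.mem_divisors, Finset.mem_Ico] at hx
    obtain ⟨⟨hdvd, hne⟩, hb1, hbt⟩ := hx
    have ht : a * (n / a) = n := Nat.mul_div_cancel' hdvd
    simp only [Dg, Finset.mem_filter, mem_Qd]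
    have ha : 0 < a := by
      rcases Nat.eq_zero_or_pos a with h | h
      · subst h; simp at ht; omega
      · exact h
    refine ⟨⟨ha, by omega, ha, by omega, ?_⟩, trivial⟩
    obtain ⟨u, hu⟩ : ∃ u, n / a = b + u := ⟨n / a - b, by omega⟩
    rw [hu]
    have : b + u - b = u := by omega
    rw [this]
    rw [hu] at ht
    rw [← ht]; ring
  · rintro ⟨a, b, c, d⟩ hx
    simp only [Dg, Finset.mem_filter, mem_Qd] at hx
    obtain ⟨⟨ha, hb, hc, hd, he⟩, hac⟩ := hx
    subst hac
    have hdvd : a ∣ n := ⟨b + d, by rw [← he]; ring⟩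
    have ht : n / a = b + d := by
      rw [← he]
      rw [show a * b + a * d = a * (b + d) by ring]
      exact Nat.mul_div_cancel_left _ ha
    simp only [Finset.mem_sigma, Nat.mem_divisors, Finset.mem_Ico]
    exact ⟨⟨hdvd, by omega⟩, by omega, by omega⟩
  · rintro ⟨a, b⟩ _; rfl
  · rintro ⟨a, b, c, d⟩ hx
    simp only [Dg, Finset.mem_filter, mem_Qd] at hx
    obtain ⟨⟨ha, hb, hc, hd, he⟩, hac⟩ := hx
    subst hac
    have ht : n / a = b + d := by
      rw [← he, show a * b + a * d = a * (b + d) by ring]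
      exact Nat.mul_div_cancel_left _ ha
    simp only [Prod.mk.injEq, true_and, and_true]
    omega
  · rintro ⟨a, b⟩ hx
    simp only [Finset.mem_sigma, Nat.mem_divisors, Finset.mem_Ico] at hx
    rfl
lemma lhs_sum (n : ℕ) :
    ∑ m ∈ Finset.Ico 1 n, (sigma' 1 m : ℤ) * sigma' 1 (n - m)
      = ∑ x ∈ Qd n, (x.2.1 : ℤ) * (x.2.2.2 : ℤ) := by
  have h1 : ∀ m ∈ Finset.Ico 1 n, (sigma' 1 m : ℤ) * sigma' 1 (n - m)
      = ∑ x ∈ m.divisors ×ˢ (n - m).divisors, (x.1 : ℤ) * (x.2 : ℤ) := by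
    intro m hm
    rw [sigma', sigma']
    push_cast
    rw [Finset.sum_mul_sum, Finset.sum_product]
    simp [pow_one]
  rw [Finset.sum_congr rfl h1]
  rw [Finset.sum_sigma' (Finset.Ico 1 n) (fun m => m.divisors ×ˢ (n - m).divisors)
    (fun _ x => (x.1 : ℤ) * (x.2 : ℤ))]
  refine (Finset.sum_nbij' (fun x => (⟨x.1 * x.2.1, (x.2.1, x.2.2.2)⟩ : Σ _ : ℕ, ℕ × ℕ))
    (fun y => (y.1 / y.2.1, y.2.1, (n - y.1) / y.2.2, y.2.2)) ?_ ?_ ?_ ?_ ?_).symm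
  · rintro ⟨a, b, c, d⟩ hx
    simp only [mem_Qd] at hx
    obtain ⟨ha, hb, hc, hd, he⟩ := hx
    have hcd : 0 < c * d := Nat.mul_pos hc hd
    have hab : 0 < a * b := Nat.mul_pos ha hb
    have hlt : a * b < n := by
      have := Nat.lt_add_of_pos_right (k := c * d) (n := a * b) hcd
      omega
    have hsub : n - a * b = c * d := by omega
    simp only [Finset.mem_sigma, Finset.mem_Ico, Finset.mem_product, Nat.mem_divisors]
    exact ⟨⟨by omega, hlt⟩, ⟨dvd_mul_left b a, by omega⟩, by rw [hsub]; exact ⟨dvd_mul_left d c, by omega⟩⟩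
  · rintro ⟨m, p, q⟩ hy
    simp only [Finset.mem_sigma, Finset.mem_Ico, Finset.mem_product, Nat.mem_divisors] at hy
    obtain ⟨⟨hm1, hmn⟩, ⟨hpm, hm0⟩, hqm, hnm0⟩ := hy
    have hp : 0 < p := Nat.pos_of_ne_zero (by rintro rfl; exact hm0 (Nat.eq_zero_of_zero_dvd hpm))
    have hq : 0 < q := Nat.pos_of_ne_zero (by rintro rfl; exact hnm0 (Nat.eq_zero_of_zero_dvd hqm))
    simp only [mem_Qd]
    refine ⟨Nat.div_pos (Nat.le_of_dvd (by omega) hpm) hp, hp,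
      Nat.div_pos (Nat.le_of_dvd (by omega) hqm) hq, hq, ?_⟩
    rw [Nat.div_mul_cancel hpm, Nat.div_mul_cancel hqm]
    omega
  · rintro ⟨a, b, c, d⟩ hx
    simp only [mem_Qd] at hx
    obtain ⟨ha, hb, hc, hd, he⟩ := hx
    have hsub : n - a * b = c * d := by
      have := Nat.lt_add_of_pos_right (k := c * d) (n := a * b) (Nat.mul_pos hc hd)
      omega
    simp only
    rw [hsub, Nat.mul_div_cancel _ hb, Nat.mul_div_cancel _ hd]
  · rintro ⟨m, p, q⟩ hy
    simp only [Finset.mem_sigma, Finset.mem_Ico, Finset.mem_product, Nat.mem_divisors] at hy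
    obtain ⟨⟨hm1, hmn⟩, ⟨hpm, hm0⟩, hqm, hnm0⟩ := hy
    simp only
    have h : m / p * p = m := Nat.div_mul_cancel hpm
    rw [h]
  · rintro ⟨m, p, q⟩ _
    rfl
lemma r1 (t : ℕ) : 2 * ∑ b ∈ Finset.range t, (b:ℤ) = (t:ℤ)^2 - t := by
  induction t with
  | zero => simp
  | succ t ih => rw [Finset.sum_range_succ]; push_cast; push_cast at ih; linarith

lemma r2 (t : ℕ) : 6 * ∑ b ∈ Finset.range t, (b:ℤ)^2 = 2*(t:ℤ)^3 - 3*(t:ℤ)^2 + t := by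
  induction t with
  | zero => simp
  | succ t ih => rw [Finset.sum_range_succ]; push_cast; push_cast at ih; linarith

lemma ico_range (t : ℕ) (g : ℕ → ℤ) (h : g 0 = 0) :
    ∑ b ∈ Finset.Ico 1 t, g b = ∑ b ∈ Finset.range t, g b := by
  rw [Finset.range_eq_Ico]
  apply Finset.sum_subset (Finset.Ico_subset_Ico (Nat.zero_le 1) le_rfl)
  intro x hx hnx
  simp only [Finset.mem_Ico] at hx hnx
  have : x = 0 := by omega
  rw [this, h]

lemma inner_val (A : ℤ) (t : ℕ) (ht : 1 ≤ t) :
    ∑ b ∈ Finset.Ico 1 t, (12*(b:ℤ)^2 - 6*A + 6*(b:ℤ)*((t:ℤ) - (b:ℤ)))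
      = 5*(t:ℤ)^3 - 6*(t:ℤ)^2 + (t:ℤ) - 6*A*(t:ℤ) + 6*A := by
  have hc : ∑ b ∈ Finset.Ico 1 t, (12*(b:ℤ)^2 - 6*A + 6*(b:ℤ)*((t:ℤ) - (b:ℤ)))
      = ∑ b ∈ Finset.Ico 1 t, ((6*(b:ℤ)^2 + 6*(t:ℤ)*(b:ℤ)) + (-6*A)) :=
    Finset.sum_congr rfl (fun b _ => by ring)
  rw [hc, Finset.sum_add_distrib, Finset.sum_const, Nat.card_Ico]
  rw [ico_range t (fun b => 6*(b:ℤ)^2 + 6*(t:ℤ)*(b:ℤ)) (by norm_num)]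
  rw [Finset.sum_add_distrib, ← Finset.mul_sum, ← Finset.mul_sum]
  have h1 := r1 t
  have h2 := r2 t
  rw [nsmul_eq_mul]
  have hcast : ((t - 1 : ℕ) : ℤ) = (t:ℤ) - 1 := by
    have : (1:ℕ) ≤ t := ht
    push_cast [Nat.cast_sub this]
    ring
  rw [hcast]
  linear_combination h2 + 3*(t:ℤ)*h1

lemma sigma_cast (k n : ℕ) : (sigma' k n : ℤ) = ∑ d ∈ n.divisors, (d:ℤ)^k := by
  rw [sigma']
  push_cast
  rfl

lemma key (n : ℕ) (hn : 0 < n) :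
    12 * ∑ x ∈ Dg n, (x.2.1:ℤ)^2 - 6 * ∑ x ∈ Dg n, (x.1:ℤ)^2
      + 6 * ∑ x ∈ Dg n, (x.2.1:ℤ) * (x.2.2.2:ℤ)
    = 5 * (sigma' 3 n : ℤ) + (1 - 6 * (n:ℤ)) * (sigma' 1 n : ℤ) := by
  rw [diag_sum n hn (fun x => (x.2.1:ℤ)^2), diag_sum n hn (fun x => (x.1:ℤ)^2),
      diag_sum n hn (fun x => (x.2.1:ℤ) * (x.2.2.2:ℤ))]
  simp only
  rw [Finset.mul_sum, Finset.mul_sum, Finset.mul_sum,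
      ← Finset.sum_sub_distrib, ← Finset.sum_add_distrib]
  have hmain : ∀ a ∈ n.divisors,
      (12 * ∑ b ∈ Finset.Ico 1 (n / a), (b:ℤ)^2
        - 6 * ∑ b ∈ Finset.Ico 1 (n / a), (a:ℤ)^2
        + 6 * ∑ b ∈ Finset.Ico 1 (n / a), (b:ℤ) * ((n / a - b : ℕ):ℤ))
      = 5*((n/a : ℕ):ℤ)^3 - 6*((n/a : ℕ):ℤ)^2 + ((n/a : ℕ):ℤ)
          - 6*(n:ℤ)*(a:ℤ) + 6*(a:ℤ)^2 := by
    intro a ha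
    simp only [Nat.mem_divisors] at ha
    obtain ⟨hdvd, hne⟩ := ha
    have ha0 : 0 < a := Nat.pos_of_mem_divisors (Nat.mem_divisors.2 ⟨hdvd, hne⟩)
    have ht : 1 ≤ n / a := Nat.div_pos (Nat.le_of_dvd hn hdvd) ha0
    have han : (a:ℤ) * ((n / a : ℕ):ℤ) = (n:ℤ) := by
      rw [← Nat.cast_mul, Nat.mul_div_cancel' hdvd]
    have hstep : (12 * ∑ b ∈ Finset.Ico 1 (n / a), (b:ℤ)^2
        - 6 * ∑ b ∈ Finset.Ico 1 (n / a), (a:ℤ)^2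
        + 6 * ∑ b ∈ Finset.Ico 1 (n / a), (b:ℤ) * ((n / a - b : ℕ):ℤ))
        = ∑ b ∈ Finset.Ico 1 (n / a),
            (12*(b:ℤ)^2 - 6*((a:ℤ)^2) + 6*(b:ℤ)*(((n/a : ℕ):ℤ) - (b:ℤ))) := by
      rw [Finset.mul_sum, Finset.mul_sum, Finset.mul_sum,
          ← Finset.sum_sub_distrib, ← Finset.sum_add_distrib]
      refine Finset.sum_congr rfl (fun b hb => ?_)
      simp only [Finset.mem_Ico] at hb
      have hble : b ≤ n / a := le_of_lt hb.2
      rw [Nat.cast_sub hble]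
      ring
    rw [hstep, inner_val ((a:ℤ)^2) (n / a) ht]
    have h6 : 6*((a:ℤ)^2)*((n/a:ℕ):ℤ) = 6*(n:ℤ)*(a:ℤ) := by
      rw [show ((a:ℤ))^2 = (a:ℤ)*(a:ℤ) by ring, mul_assoc, mul_assoc, han]
      ring
    linarith [h6]
  rw [Finset.sum_congr rfl hmain]
  simp only [Finset.sum_add_distrib, Finset.sum_sub_distrib, ← Finset.mul_sum]
  rw [Nat.sum_div_divisors n (fun d => (d:ℤ)^3), Nat.sum_div_divisors n (fun d => (d:ℤ)^2),
      Nat.sum_div_divisors n (fun d => (d:ℤ))]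
  rw [sigma_cast, sigma_cast]
  simp only [pow_one]
  ring
theorem ramanujan_DG2 (n : ℕ) (hn : 1 ≤ n) :
    12 * ∑ m ∈ Finset.Ico 1 n, (sigma' 1 m : ℤ) * sigma' 1 (n - m) =
      5 * sigma' 3 n + (1 - 6 * (n : ℤ)) * sigma' 1 n := by
  have hn0 : 0 < n := hn
  rw [lhs_sum n]
  have T1 : ∑ x ∈ Qd n, (x.2.1:ℤ) * (x.2.2.2:ℤ)
      = ∑ x ∈ Pd n, (x.2.1:ℤ) * (x.2.2.2:ℤ) + ∑ x ∈ Pd n, (x.2.1:ℤ) * (x.2.2.2:ℤ)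
        + ∑ x ∈ Dg n, (x.2.1:ℤ) * (x.2.2.2:ℤ) := by
    rw [split_sum n (fun x => (x.2.1:ℤ) * (x.2.2.2:ℤ)),
        sigma1_sum n (fun x => (x.2.1:ℤ) * (x.2.2.2:ℤ))]
    simp only
    have e : ∑ x ∈ Pd n, (x.2.2.2:ℤ) * (x.2.1:ℤ)
        = ∑ x ∈ Pd n, (x.2.1:ℤ) * (x.2.2.2:ℤ) :=
      Finset.sum_congr rfl fun x _ => mul_comm _ _
    linarith [e]
  have T2 : ∑ x ∈ Qd n, (x.1:ℤ) * (x.2.2.1:ℤ) = ∑ x ∈ Qd n, (x.2.1:ℤ) * (x.2.2.2:ℤ) := by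
    have := sigma2_sum n (fun x => (x.1:ℤ) * (x.2.2.1:ℤ))
    simpa using this
  have T3 : ∑ x ∈ Qd n, (x.1:ℤ) * (x.2.2.1:ℤ)
      = ∑ x ∈ Pd n, (x.1:ℤ) * (x.2.2.1:ℤ) + ∑ x ∈ Pd n, (x.1:ℤ) * (x.2.2.1:ℤ)
        + ∑ x ∈ Dg n, (x.1:ℤ)^2 := by
    rw [split_sum n (fun x => (x.1:ℤ) * (x.2.2.1:ℤ)),
        sigma1_sum n (fun x => (x.1:ℤ) * (x.2.2.1:ℤ))]
    simp only
    have e1 : ∑ x ∈ Pd n, (x.2.2.1:ℤ) * (x.1:ℤ)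
        = ∑ x ∈ Pd n, (x.1:ℤ) * (x.2.2.1:ℤ) :=
      Finset.sum_congr rfl fun x _ => mul_comm _ _
    have e2 : ∑ x ∈ Dg n, (x.1:ℤ) * (x.2.2.1:ℤ) = ∑ x ∈ Dg n, (x.1:ℤ)^2 := by
      refine Finset.sum_congr rfl fun x hx => ?_
      simp only [Dg, Finset.mem_filter] at hx
      rw [← hx.2]; ring
    linarith [e1, e2]
  have T4 : ∑ x ∈ Qd n, (x.1:ℤ)^2
      = ∑ x ∈ Pd n, (x.1:ℤ)^2 + ∑ x ∈ Pd n, (x.2.2.1:ℤ)^2 + ∑ x ∈ Dg n, (x.1:ℤ)^2 := by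
    rw [split_sum n (fun x => (x.1:ℤ)^2), sigma1_sum n (fun x => (x.1:ℤ)^2)]
  have T5 : ∑ x ∈ Qd n, (x.2.1:ℤ)^2
      = ∑ x ∈ Pd n, (x.2.1:ℤ)^2 + ∑ x ∈ Pd n, (x.2.2.2:ℤ)^2 + ∑ x ∈ Dg n, (x.2.1:ℤ)^2 := by
    rw [split_sum n (fun x => (x.2.1:ℤ)^2), sigma1_sum n (fun x => (x.2.1:ℤ)^2)]
  have T6 : ∑ x ∈ Qd n, (x.1:ℤ)^2 = ∑ x ∈ Qd n, (x.2.1:ℤ)^2 := by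
    have := sigma2_sum n (fun x => (x.1:ℤ)^2)
    simpa using this
  have T7 : ∑ x ∈ Pd n, (x.1:ℤ)^2
      = ∑ x ∈ Pd n, (x.2.1:ℤ)^2 + 2 * ∑ x ∈ Pd n, (x.2.1:ℤ) * (x.2.2.2:ℤ)
        + ∑ x ∈ Pd n, (x.2.2.2:ℤ)^2 := by
    rw [theta_sum n (fun x => (x.1:ℤ)^2)]
    simp only
    have e : ∑ x ∈ Pd n, ((x.2.1 + x.2.2.2 : ℕ):ℤ)^2
        = ∑ x ∈ Pd n, ((x.2.1:ℤ)^2 + 2 * ((x.2.1:ℤ) * (x.2.2.2:ℤ)) + (x.2.2.2:ℤ)^2) :=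
      Finset.sum_congr rfl fun x _ => by push_cast; ring
    rw [e, Finset.sum_add_distrib, Finset.sum_add_distrib, ← Finset.mul_sum]
  have T8 : ∑ x ∈ Pd n, (x.2.2.2:ℤ)^2
      = ∑ x ∈ Pd n, (x.1:ℤ)^2 - 2 * ∑ x ∈ Pd n, (x.1:ℤ) * (x.2.2.1:ℤ)
        + ∑ x ∈ Pd n, (x.2.2.1:ℤ)^2 := by
    rw [theta_sum n (fun x => (x.2.2.2:ℤ)^2)]
    simp only
    have e : ∑ x ∈ Pd n, ((x.1 - x.2.2.1 : ℕ):ℤ)^2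
        = ∑ x ∈ Pd n, ((x.1:ℤ)^2 - 2 * ((x.1:ℤ) * (x.2.2.1:ℤ)) + (x.2.2.1:ℤ)^2) := by
      refine Finset.sum_congr rfl fun x hx => ?_
      simp only [Pd, Finset.mem_filter] at hx
      rw [Nat.cast_sub (le_of_lt hx.2)]
      ring
    rw [e, Finset.sum_add_distrib, Finset.sum_sub_distrib, ← Finset.mul_sum]
  have T9 : ∑ x ∈ Pd n, (x.2.2.1:ℤ)^2 = ∑ x ∈ Pd n, (x.2.1:ℤ)^2 := by
    rw [theta_sum n (fun x => (x.2.2.1:ℤ)^2)]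
  have K := key n hn0
  linarith [T1, T2, T3, T4, T5, T6, T7, T8, T9, K]
end

section
/- For every integer n ≥ 1, we have 240·Σ_{m=1}^{n−1} σ_1(m)·σ_3(n−m) = 21·σ_5(n) + (10 − 30n)·σ_3(n) − σ_1(n). -/
open Finset

theorem Finset.sum_eq_sum_filter_lt_add_sum_filter_eq {α β M : Type*} [LinearOrder β]
    [AddCommMonoid M] {s : Finset α} {σ : α → α} (hσ : Function.Involutive σ)
    (hs : ∀ p ∈ s, σ p ∈ s) {u v : α → β} (huv : ∀ p, u (σ p) = v p) (F : α → M) :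
    ∑ p ∈ s, F p = ∑ p ∈ s with v p < u p, (F p + F (σ p)) + ∑ p ∈ s with u p = v p, F p := by
  have hvu : ∀ p, v (σ p) = u p := fun p => by rw [← huv, hσ]
  have hflip : ∑ p ∈ s with u p < v p, F p = ∑ p ∈ s with v p < u p, F (σ p) :=
    sum_nbij' σ σ (by simp_all) (by simp_all) (fun p _ => hσ p) (fun p _ => hσ p)
      (fun p _ => by rw [hσ])
  rw [sum_add_distrib, ← hflip, ← sum_filter_add_sum_filter_not s (fun p => v p < u p),
    ← sum_filter_add_sum_filter_not (s.filter fun p => ¬ v p < u p) (fun p => u p < v p),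
    filter_filter, filter_filter, add_assoc]
  congr 2 <;> refine sum_congr (filter_congr fun p _ => ?_) fun _ _ => rfl
  · exact ⟨And.right, fun h => ⟨h.asymm, h⟩⟩
  · exact ⟨fun h => le_antisymm (not_lt.1 h.1) (not_lt.1 h.2), fun h => by simp [h]⟩

def bilinearReps (n : ℕ) : Finset ((ℕ × ℕ) × (ℕ × ℕ)) :=
  ((Icc 1 n ×ˢ Icc 1 n) ×ˢ (Icc 1 n ×ˢ Icc 1 n)).filter
    fun p => p.1.1 * p.2.1 + p.1.2 * p.2.2 = n

theorem mem_bilinearReps {n a b x y : ℕ} :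
    ((a, b), (x, y)) ∈ bilinearReps n ↔ 0 < a ∧ 0 < b ∧ 0 < x ∧ 0 < y ∧ a * x + b * y = n := by
  simp only [bilinearReps, mem_filter, mem_product, mem_Icc]
  constructor
  · rintro ⟨⟨⟨⟨ha, -⟩, hb, -⟩, ⟨hx, -⟩, hy, -⟩, h⟩
    exact ⟨ha, hb, hx, hy, h⟩
  · rintro ⟨ha, hb, hx, hy, h⟩
    refine ⟨⟨⟨⟨ha, ?_⟩, hb, ?_⟩, ⟨hx, ?_⟩, hy, ?_⟩, h⟩ <;> nlinarith

theorem swap_mem_bilinearReps {n : ℕ} {p : (ℕ × ℕ) × (ℕ × ℕ)} (hp : p ∈ bilinearReps n) :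
    (p.1.swap, p.2.swap) ∈ bilinearReps n := by
  obtain ⟨⟨a, b⟩, ⟨x, y⟩⟩ := p
  simp only [mem_bilinearReps, Prod.swap_prod_mk] at hp ⊢
  omega

section BilinearReps

variable {M : Type*} [AddCommMonoid M] {n : ℕ}

theorem sum_bilinearReps_eq_sum_Ico (F : (ℕ × ℕ) × (ℕ × ℕ) → M) :
    ∑ p ∈ bilinearReps n, F p = ∑ m ∈ Ico 1 n,
      ∑ q ∈ m.divisorsAntidiagonal ×ˢ (n - m).divisorsAntidiagonal,
        F ((q.1.1, q.2.1), (q.1.2, q.2.2)) := by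
  rw [sum_sigma']
  refine sum_nbij' (fun p => ⟨p.1.1 * p.2.1, ((p.1.1, p.2.1), (p.1.2, p.2.2))⟩)
    (fun q => ((q.2.1.1, q.2.2.1), (q.2.1.2, q.2.2.2))) ?_ ?_ ?_ ?_ ?_
  · rintro ⟨⟨a, b⟩, ⟨x, y⟩⟩ hp
    obtain ⟨ha, hb, hx, hy, h⟩ := mem_bilinearReps.1 hp
    have hax := Nat.mul_pos ha hx
    have hby := Nat.mul_pos hb hy
    simp only [mem_sigma, mem_Ico, mem_product, Nat.mem_divisorsAntidiagonal]
    subst h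
    refine ⟨⟨hax, by omega⟩, ⟨trivial, hax.ne'⟩, (Nat.add_sub_cancel_left ..).symm, by omega⟩
  · rintro ⟨m, ⟨a, x⟩, ⟨b, y⟩⟩ hq
    simp only [mem_sigma, mem_Ico, mem_product, Nat.mem_divisorsAntidiagonal] at hq
    obtain ⟨hmn, ⟨hax, hm⟩, hby, hnm⟩ := hq
    rw [← hax, mul_ne_zero_iff] at hm
    rw [← hby, mul_ne_zero_iff] at hnm
    simp only [mem_bilinearReps]
    omega
  · intro p _
    rfl
  · rintro ⟨m, ⟨a, x⟩, ⟨b, y⟩⟩ hq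
    simp only [mem_sigma, mem_product, Nat.mem_divisorsAntidiagonal] at hq
    obtain ⟨-, ⟨rfl, -⟩, -⟩ := hq
    rfl
  · intro p _
    rfl

theorem sum_bilinearReps_filter_fst_lt (F : (ℕ × ℕ) × (ℕ × ℕ) → M) :
    ∑ p ∈ bilinearReps n with p.1.1 < p.1.2, F p =
      ∑ p ∈ bilinearReps n with p.2.2 < p.2.1,
        F ((p.1.1, p.1.1 + p.1.2), (p.2.1 - p.2.2, p.2.2)) := by
  refine sum_nbij' (fun p => ((p.1.1, p.1.2 - p.1.1), (p.2.1 + p.2.2, p.2.2)))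
    (fun p => ((p.1.1, p.1.1 + p.1.2), (p.2.1 - p.2.2, p.2.2))) ?_ ?_ ?_ ?_ ?_ <;>
  rintro ⟨⟨a, b⟩, ⟨x, y⟩⟩ hp <;>
  simp only [mem_filter, mem_bilinearReps] at hp ⊢
  · obtain ⟨⟨ha, hb, hx, hy, h⟩, hab⟩ := hp
    refine ⟨⟨ha, by omega, by omega, hy, ?_⟩, by omega⟩
    obtain ⟨c, rfl⟩ := Nat.exists_eq_add_of_le hab.le
    rw [← h, Nat.add_sub_cancel_left]
    ring
  · obtain ⟨⟨ha, hb, hx, hy, h⟩, hyx⟩ := hp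
    refine ⟨⟨ha, by omega, by omega, hy, ?_⟩, by omega⟩
    obtain ⟨c, rfl⟩ := Nat.exists_eq_add_of_le hyx.le
    rw [← h, Nat.add_sub_cancel_left]
    ring
  · rw [Nat.add_sub_cancel' hp.2.le, Nat.add_sub_cancel]
  · rw [Nat.add_sub_cancel_left, Nat.sub_add_cancel hp.2.le]
  · rw [Nat.add_sub_cancel' hp.2.le, Nat.add_sub_cancel]

theorem sum_bilinearReps_filter_snd_eq (F : (ℕ × ℕ) × (ℕ × ℕ) → M) :
    ∑ p ∈ bilinearReps n with p.2.1 = p.2.2, F p =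
      ∑ q ∈ n.divisorsAntidiagonal, ∑ a ∈ Ico 1 q.2, F ((a, q.2 - a), (q.1, q.1)) := by
  rw [sum_sigma']
  refine sum_nbij' (fun p => ⟨(p.2.1, p.1.1 + p.1.2), p.1.1⟩)
    (fun q => ((q.2, q.1.2 - q.2), (q.1.1, q.1.1))) ?_ ?_ ?_ ?_ ?_
  · rintro ⟨⟨a, b⟩, ⟨x, y⟩⟩ hp
    simp only [mem_filter, mem_bilinearReps] at hp
    obtain ⟨⟨ha, hb, hx, -, h⟩, rfl⟩ := hp
    simp only [mem_sigma, mem_Ico, Nat.mem_divisorsAntidiagonal]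
    refine ⟨⟨by rw [← h]; ring, by rw [← h]; exact (Nat.add_pos_left (Nat.mul_pos ha hx) _).ne'⟩,
      ha, by omega⟩
  · rintro ⟨⟨x, e⟩, a⟩ hq
    simp only [mem_sigma, mem_Ico, Nat.mem_divisorsAntidiagonal] at hq
    obtain ⟨⟨h, hn⟩, ha, hae⟩ := hq
    rw [← h, mul_ne_zero_iff] at hn
    simp only [mem_filter, mem_bilinearReps]
    refine ⟨⟨ha, by omega, by omega, by omega, ?_⟩, trivial⟩
    rw [← h, ← add_mul, Nat.add_sub_cancel' hae.le, mul_comm]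
  · rintro ⟨⟨a, b⟩, ⟨x, y⟩⟩ hp
    simp only [mem_filter] at hp
    simp only [hp.2, Nat.add_sub_cancel_left]
  · rintro ⟨⟨x, e⟩, a⟩ hq
    simp only [mem_sigma, mem_Ico] at hq
    simp only [Nat.add_sub_cancel' hq.2.2.le]
  · rintro ⟨⟨a, b⟩, ⟨x, y⟩⟩ hp
    simp only [mem_filter] at hp
    simp only [hp.2, Nat.add_sub_cancel_left]

theorem sum_bilinearReps_filter_fst_eq (F : (ℕ × ℕ) × (ℕ × ℕ) → M) :
    ∑ p ∈ bilinearReps n with p.1.2 = p.1.1, F p =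
      ∑ q ∈ n.divisorsAntidiagonal, ∑ x ∈ Ico 1 q.2, F ((q.1, q.1), (x, q.2 - x)) := by
  have htranspose := sum_bilinearReps_filter_snd_eq (n := n) fun p => F p.swap
  simp only [Prod.swap_prod_mk] at htranspose
  rw [← htranspose]
  refine sum_nbij' Prod.swap Prod.swap ?_ ?_ (fun _ _ => rfl) (fun _ _ => rfl) (fun _ _ => rfl) <;>
  rintro ⟨⟨a, b⟩, ⟨x, y⟩⟩ hp <;>
  simp only [mem_filter, mem_bilinearReps, Prod.swap_prod_mk] at hp ⊢ <;>
  refine ⟨⟨hp.1.2.2.1, hp.1.2.2.2.1, hp.1.1, hp.1.2.1, ?_⟩, hp.2.symm⟩ <;>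
  linarith [hp.1.2.2.2.2, mul_comm a x, mul_comm b y]

end BilinearReps

theorem sum_bilinearReps_diag_sub_diag {M : Type*} [AddCommGroup M] (n : ℕ) (h : ℕ → ℕ → M) :
    ∑ p ∈ bilinearReps n with p.2.1 = p.2.2, h p.1.1 p.1.2 -
        ∑ p ∈ bilinearReps n with p.1.2 = p.1.1, h p.1.1 p.1.2 =
      ∑ p ∈ bilinearReps n with p.2.2 < p.2.1,
        ((h p.1.1 (p.1.1 + p.1.2) + h (p.1.1 + p.1.2) p.1.1) -
          (h p.1.1 p.1.2 + h p.1.2 p.1.1)) := by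
  have hsnd := sum_eq_sum_filter_lt_add_sum_filter_eq (fun _ => rfl)
    (fun _ => swap_mem_bilinearReps (n := n)) (u := fun p => p.2.1) (v := fun p => p.2.2)
    (fun _ => rfl) fun p => h p.1.1 p.1.2
  have hfst := sum_eq_sum_filter_lt_add_sum_filter_eq (fun _ => rfl)
    (fun _ => swap_mem_bilinearReps (n := n)) (u := fun p => p.1.2) (v := fun p => p.1.1)
    (fun _ => rfl) fun p => h p.1.1 p.1.2
  rw [sum_bilinearReps_filter_fst_lt] at hfst
  rw [sum_sub_distrib, sub_eq_sub_iff_add_eq_add, add_comm]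
  exact hsnd.symm.trans hfst

section PowerSums

variable {R : Type*} [CommRing R]

theorem two_mul_sum_range_id (n : ℕ) : 2 * ∑ i ∈ range n, (i : R) = n ^ 2 - n := by
  induction n with
  | zero => simp
  | succ n ih => rw [sum_range_succ]; push_cast; linear_combination ih

theorem six_mul_sum_range_sq (n : ℕ) :
    6 * ∑ i ∈ range n, (i : R) ^ 2 = 2 * n ^ 3 - 3 * n ^ 2 + n := by
  induction n with
  | zero => simp
  | succ n ih => rw [sum_range_succ]; push_cast; linear_combination ih

theorem four_mul_sum_range_cube (n : ℕ) :
    4 * ∑ i ∈ range n, (i : R) ^ 3 = n ^ 4 - 2 * n ^ 3 + n ^ 2 := by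
  induction n with
  | zero => simp
  | succ n ih => rw [sum_range_succ]; push_cast; linear_combination ih

theorem thirty_mul_sum_range_pow_four (n : ℕ) :
    30 * ∑ i ∈ range n, (i : R) ^ 4 = 6 * n ^ 5 - 15 * n ^ 4 + 10 * n ^ 3 - n := by
  induction n with
  | zero => simp
  | succ n ih => rw [sum_range_succ]; push_cast; linear_combination ih

end PowerSums

theorem sigma'_eq_sum_fst {R : Type*} [Semiring R] (k n : ℕ) :
    (sigma' k n : R) = ∑ q ∈ n.divisorsAntidiagonal, (q.1 : R) ^ k := by
  rw [Nat.sum_divisorsAntidiagonal fun d _ => (d : R) ^ k, sigma']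
  push_cast
  rfl

theorem sigma'_eq_sum_snd {R : Type*} [Semiring R] (k n : ℕ) :
    (sigma' k n : R) = ∑ q ∈ n.divisorsAntidiagonal, (q.2 : R) ^ k := by
  rw [Nat.sum_divisorsAntidiagonal' fun _ e => (e : R) ^ k, sigma']
  push_cast
  rfl

theorem sum_Ico_sigma'_mul_sigma' {R : Type*} [CommSemiring R] (i j n : ℕ) :
    ∑ m ∈ Ico 1 n, (sigma' i m : R) * sigma' j (n - m) =
      ∑ p ∈ bilinearReps n, (p.1.1 : R) ^ i * (p.1.2 : R) ^ j := by
  rw [sum_bilinearReps_eq_sum_Ico]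
  refine sum_congr rfl fun m _ => ?_
  rw [sigma'_eq_sum_fst, sigma'_eq_sum_fst, sum_mul_sum, sum_product]

def eisensteinNormSq (a b : ℕ) : ℤ := ((a : ℤ) ^ 2 - a * b + b ^ 2) ^ 2

theorem eisensteinNormSq_self (a : ℕ) : eisensteinNormSq a a = (a : ℤ) ^ 4 := by
  rw [eisensteinNormSq]
  ring

theorem eisensteinNormSq_add_sub (a b : ℕ) :
    eisensteinNormSq a (a + b) + eisensteinNormSq (a + b) a -
        (eisensteinNormSq a b + eisensteinNormSq b a) =
      8 * ((a : ℤ) * b ^ 3 + (b : ℤ) * a ^ 3) := by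
  simp only [eisensteinNormSq]
  push_cast
  ring

theorem eight_mul_sum_bilinearReps (n : ℕ) :
    8 * ∑ p ∈ bilinearReps n, (p.1.1 : ℤ) * p.1.2 ^ 3 =
      ∑ p ∈ bilinearReps n with p.2.1 = p.2.2,
          (eisensteinNormSq p.1.1 p.1.2 + 8 * p.1.1 * p.1.2 ^ 3) -
        ∑ p ∈ bilinearReps n with p.1.2 = p.1.1, eisensteinNormSq p.1.1 p.1.2 := by
  have hsplit := sum_eq_sum_filter_lt_add_sum_filter_eq (fun _ => rfl)
    (fun _ => swap_mem_bilinearReps (n := n)) (u := fun p => p.2.1) (v := fun p => p.2.2)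
    (fun _ => rfl) fun p => (p.1.1 : ℤ) * p.1.2 ^ 3
  simp only [Prod.fst_swap, Prod.snd_swap] at hsplit
  have hdiag := sum_bilinearReps_diag_sub_diag n eisensteinNormSq
  simp only [eisensteinNormSq_add_sub, ← mul_sum] at hdiag
  have hdiag_cubic : ∑ p ∈ bilinearReps n with p.2.1 = p.2.2,
      (eisensteinNormSq p.1.1 p.1.2 + 8 * p.1.1 * p.1.2 ^ 3) =
      ∑ p ∈ bilinearReps n with p.2.1 = p.2.2, eisensteinNormSq p.1.1 p.1.2 +
        8 * ∑ p ∈ bilinearReps n with p.2.1 = p.2.2, (p.1.1 : ℤ) * p.1.2 ^ 3 := by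
    simp only [sum_add_distrib, mul_sum, mul_assoc]
  linear_combination 8 * hsplit - hdiag_cubic - hdiag

theorem thirty_mul_sum_Ico_eisensteinNormSq (e : ℕ) :
    30 * ∑ a ∈ Ico 1 e, (eisensteinNormSq a (e - a) + 8 * a * (e - a : ℕ) ^ 3) =
      21 * (e : ℤ) ^ 5 - 30 * e ^ 4 + 10 * e ^ 3 - e := by
  rcases e.eq_zero_or_pos with rfl | he
  · simp
  have hpoly : ∀ a ∈ Ico 1 e, eisensteinNormSq a (e - a) + 8 * a * (e - a : ℕ) ^ 3 =
      (e : ℤ) ^ 4 + 2 * e ^ 3 * a - 9 * e ^ 2 * a ^ 2 + 6 * e * a ^ 3 + a ^ 4 := by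
    intro a ha
    rw [eisensteinNormSq, Nat.cast_sub (mem_Ico.1 ha).2.le]
    ring
  rw [sum_congr rfl hpoly, sum_Ico_eq_sub _ he, sum_range_one]
  simp only [sum_add_distrib, sum_sub_distrib, ← mul_sum, sum_const, card_range, nsmul_eq_mul]
  linear_combination 30 * (e : ℤ) ^ 3 * two_mul_sum_range_id (R := ℤ) e -
    45 * (e : ℤ) ^ 2 * six_mul_sum_range_sq (R := ℤ) e +
    45 * (e : ℤ) * four_mul_sum_range_cube (R := ℤ) e + thirty_mul_sum_range_pow_four (R := ℤ) e

theorem thirty_mul_sum_bilinearReps_filter_snd_eq (n : ℕ) :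
    30 * ∑ p ∈ bilinearReps n with p.2.1 = p.2.2,
        (eisensteinNormSq p.1.1 p.1.2 + 8 * p.1.1 * p.1.2 ^ 3) =
      21 * (sigma' 5 n : ℤ) - 30 * sigma' 4 n + 10 * sigma' 3 n - sigma' 1 n := by
  rw [sum_bilinearReps_filter_snd_eq, mul_sum,
    sum_congr rfl fun q _ => thirty_mul_sum_Ico_eisensteinNormSq q.2]
  simp only [sigma'_eq_sum_snd, pow_one, mul_sum, ← sum_add_distrib, ← sum_sub_distrib]

theorem sum_bilinearReps_filter_fst_eq_eisensteinNormSq (n : ℕ) :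
    ∑ p ∈ bilinearReps n with p.1.2 = p.1.1, eisensteinNormSq p.1.1 p.1.2 =
      n * (sigma' 3 n : ℤ) - sigma' 4 n := by
  rw [sum_bilinearReps_filter_fst_eq, sigma'_eq_sum_fst, sigma'_eq_sum_fst, mul_sum,
    ← sum_sub_distrib]
  refine sum_congr rfl fun q hq => ?_
  dsimp only
  obtain ⟨hn, hn0⟩ := Nat.mem_divisorsAntidiagonal.1 hq
  rw [← hn, mul_ne_zero_iff] at hn0
  rw [sum_const, Nat.card_Ico, nsmul_eq_mul, eisensteinNormSq_self, Nat.cast_sub (by omega), ← hn]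
  push_cast
  ring

theorem ramanujan_DG4_general (n : ℕ) :
    240 * ∑ m ∈ Finset.Ico 1 n, (sigma' 1 m : ℤ) * sigma' 3 (n - m) =
      21 * sigma' 5 n + (10 - 30 * (n : ℤ)) * sigma' 3 n - sigma' 1 n := by
  rw [sum_Ico_sigma'_mul_sigma']
  simp only [pow_one]
  linear_combination 30 * eight_mul_sum_bilinearReps n +
    thirty_mul_sum_bilinearReps_filter_snd_eq n -
    30 * sum_bilinearReps_filter_fst_eq_eisensteinNormSq n

theorem ramanujan_DG4 (n : ℕ) (hn : 1 ≤ n) :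
    240 * ∑ m ∈ Finset.Ico 1 n, (sigma' 1 m : ℤ) * sigma' 3 (n - m) =
      21 * sigma' 5 n + (10 - 30 * (n : ℤ)) * sigma' 3 n - sigma' 1 n :=
  ramanujan_DG4_general n
end
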